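/- arXiv:1308.6369 — 2 statements merged into one kernel-verified Lean document; each statement's English description precedes it below -/
import Mathlib

section
/- Let S₀ > 0, R > 0, b, c ∈ ℝ, and suppose there exists q > 2 with c - 3b/q > 0. Let V : ℝ³ × [0,S₀] → ℝ³ be of class C¹ with div V(·,s) = 0 for all s, and let f : ℝ³ × [0,S₀] → ℝ be of class C¹ with f ≥ 0, f(y,s) = 0 whenever |y| ≥ R, f(y,0) = f(y,S₀) for all y ∈ ℝ³, and satisfying the differential inequality ∂_s f + c f + b (y·∇)f + (V·∇)f ≤ 0 on B_R × (0,S₀). Then f = 0 on B_R × (0,S₀). -/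
/-!
With `h = f ^ q`, multiplying the inequality by `q f ^ (q - 1) ≥ 0` gives
`∂ₛh + q c h + b (y·∇)h + (V·∇)h ≤ 0`. Integrating over space, integration by parts turns
`∫ (y·∇)h` into `-3 ∫ h` and `∫ (V·∇)h` into `-∫ h div V = 0`, so `g(s) = ∫ h(y, s) dy` satisfies
`g' ≤ -(q c - 3 b) g`. Hence `e^{(q c - 3 b) s} g(s)` is nonincreasing; as `q c - 3 b > 0`, this is
compatible with `g(0) = g(S₀)` and `g ≥ 0` only if `g = 0`, and then `f = 0` by continuity.
-/

noncomputable section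

open Real Metric Set

/-- ℝ³ as a Euclidean space. -/
abbrev E3 := EuclideanSpace ℝ (Fin 3)

/-- Divergence of a vector field on ℝ³. -/
def div3 (f : E3 → E3) (y : E3) : ℝ :=
  ∑ i, fderiv ℝ f y (EuclideanSpace.single i 1) i

/-- The partial derivative ∂_j f_i of a vector field on ℝ³. -/
def pd3 (f : E3 → E3) (y : E3) (j i : Fin 3) : ℝ :=
  fderiv ℝ f y (EuclideanSpace.single j 1) i

/-- Curl of a vector field on ℝ³. -/
def curl3 (f : E3 → E3) (y : E3) : E3 :=
  (WithLp.equiv 2 (Fin 3 → ℝ)).symm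
    ![pd3 f y 1 2 - pd3 f y 2 1, pd3 f y 2 0 - pd3 f y 0 2, pd3 f y 0 1 - pd3 f y 1 0]

open MeasureTheory Function

section IntegrationByParts

variable {ι : Type*} [Fintype ι] [DecidableEq ι]

theorem EuclideanSpace.continuousLinearMap_apply_eq_sum (L : EuclideanSpace ℝ ι →L[ℝ] ℝ)
    (v : EuclideanSpace ℝ ι) : L v = ∑ i, L (EuclideanSpace.single i 1) * v i := by
  conv_lhs => rw [← (EuclideanSpace.basisFun ι ℝ).sum_repr v]
  simp [mul_comm]

theorem integral_fderiv_apply_eq_neg_integral_mul_divergence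
    {h : EuclideanSpace ℝ ι → ℝ} {W : EuclideanSpace ℝ ι → EuclideanSpace ℝ ι}
    (hh : ContDiff ℝ 1 h) (hh_supp : HasCompactSupport h) (hW : ContDiff ℝ 1 W) :
    ∫ y, fderiv ℝ h y (W y) = -∫ y, h y * ∑ i, fderiv ℝ W y (EuclideanSpace.single i 1) i := by
  have hWi (i : ι) (y) : HasFDerivAt (fun z => W z i)
      ((EuclideanSpace.proj (𝕜 := ℝ) i).comp (fderiv ℝ W y)) y :=
    (EuclideanSpace.proj (𝕜 := ℝ) i).hasFDerivAt.comp y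
      (hW.differentiable one_ne_zero y).hasFDerivAt
  have hWi_cont (i : ι) : Continuous fun y => W y i :=
    (EuclideanSpace.proj (𝕜 := ℝ) i).continuous.comp hW.continuous
  have hDW_cont (i : ι) : Continuous fun y => fderiv ℝ W y (EuclideanSpace.single i 1) i :=
    (EuclideanSpace.proj (𝕜 := ℝ) i).continuous.comp
      ((hW.continuous_fderiv one_ne_zero).clm_apply continuous_const)
  have hDh_int (i : ι) :
      Integrable fun y => fderiv ℝ h y (EuclideanSpace.single i 1) * W y i :=
    (((hh.continuous_fderiv one_ne_zero).clm_apply continuous_const).mul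
      (hWi_cont i)).integrable_of_hasCompactSupport
      (hh_supp.fderiv_apply (𝕜 := ℝ) _).mul_right
  have hDW_int (i : ι) :
      Integrable fun y => h y * fderiv ℝ W y (EuclideanSpace.single i 1) i :=
    (hh.continuous.mul (hDW_cont i)).integrable_of_hasCompactSupport hh_supp.mul_right
  have hibp (i : ι) : ∫ y, fderiv ℝ h y (EuclideanSpace.single i 1) * W y i
      = -∫ y, h y * fderiv ℝ W y (EuclideanSpace.single i 1) i := by
    have := integral_mul_fderiv_eq_neg_fderiv_mul_of_integrable (hDh_int i)
      (by simp only [(hWi i _).fderiv]; exact hDW_int i)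
      ((hh.continuous.mul (hWi_cont i)).integrable_of_hasCompactSupport hh_supp.mul_right)
      (fun y _ => hh.differentiable one_ne_zero y) (fun y _ => (hWi i y).differentiableAt)
    simp only [(hWi i _).fderiv] at this
    exact neg_eq_iff_eq_neg.mp this.symm
  calc ∫ y, fderiv ℝ h y (W y)
      = ∫ y, ∑ i, fderiv ℝ h y (EuclideanSpace.single i 1) * W y i := by
        simp only [← EuclideanSpace.continuousLinearMap_apply_eq_sum]
    _ = ∑ i, -∫ y, h y * fderiv ℝ W y (EuclideanSpace.single i 1) i := by
        rw [integral_finsetSum _ fun i _ => hDh_int i]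
        exact Finset.sum_congr rfl fun i _ => hibp i
    _ = -∫ y, h y * ∑ i, fderiv ℝ W y (EuclideanSpace.single i 1) i := by
        simp only [Finset.mul_sum, Finset.sum_neg_distrib,
          integral_finsetSum _ fun i _ => hDW_int i]

theorem integral_fderiv_apply_self {h : EuclideanSpace ℝ ι → ℝ} (hh : ContDiff ℝ 1 h)
    (hh_supp : HasCompactSupport h) :
    ∫ y, fderiv ℝ h y y = -(Fintype.card ι * ∫ y, h y) := by
  have := integral_fderiv_apply_eq_neg_integral_mul_divergence hh hh_supp contDiff_id
  simp only [fderiv_id, ContinuousLinearMap.id_apply, PiLp.single_apply] at this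
  simpa [integral_mul_const, mul_comm] using this

theorem integral_le_of_transport_ineq {h h' : EuclideanSpace ℝ ι → ℝ}
    {W : EuclideanSpace ℝ ι → EuclideanSpace ℝ ι} {κ b : ℝ}
    (hh : ContDiff ℝ 1 h) (hh_supp : HasCompactSupport h) (hW : ContDiff ℝ 1 W)
    (hdiv : ∀ y, ∑ i, fderiv ℝ W y (EuclideanSpace.single i 1) i = 0) (hh' : Integrable h')
    (hineq : ∀ y, h' y + κ * h y + b * fderiv ℝ h y y + fderiv ℝ h y (W y) ≤ 0) :
    ∫ y, h' y ≤ -(κ - Fintype.card ι * b) * ∫ y, h y := by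
  have hDh := hh.continuous_fderiv one_ne_zero
  have hh_int : Integrable h := hh.continuous.integrable_of_hasCompactSupport hh_supp
  have hDh_int (w : EuclideanSpace ℝ ι → EuclideanSpace ℝ ι) (hw : Continuous w) :
      Integrable fun y => fderiv ℝ h y (w y) :=
    (hDh.clm_apply hw).integrable_of_hasCompactSupport
      ((hh_supp.fderiv (𝕜 := ℝ)).mono fun y hy hy0 => hy (by simp [hy0]))
  have hflux : ∫ y, fderiv ℝ h y (W y) = 0 := by
    simp [integral_fderiv_apply_eq_neg_integral_mul_divergence hh hh_supp hW, hdiv]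
  have h₁ : Integrable fun y => -κ * h y := hh_int.const_mul _
  have h₂ : Integrable fun y => b * fderiv ℝ h y y := (hDh_int id continuous_id).const_mul _
  have h₃ : Integrable fun y => fderiv ℝ h y (W y) := hDh_int W hW.continuous
  calc ∫ y, h' y ≤ ∫ y, (-κ * h y - b * fderiv ℝ h y y - fderiv ℝ h y (W y)) :=
        integral_mono hh' ((h₁.sub h₂).sub h₃) fun y => by linarith [hineq y]
    _ = -(κ - Fintype.card ι * b) * ∫ y, h y := by
        rw [integral_sub (f := fun y => -κ * h y - b * fderiv ℝ h y y) (h₁.sub h₂) h₃,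
          integral_sub h₁ h₂, integral_const_mul, integral_const_mul,
          integral_fderiv_apply_self hh hh_supp, hflux]
        ring

theorem integral_rpow_le_of_transport_ineq {u u' : EuclideanSpace ℝ ι → ℝ}
    {W : EuclideanSpace ℝ ι → EuclideanSpace ℝ ι} {q b c R : ℝ} (hq : 1 < q)
    (hu : ContDiff ℝ 1 u) (hu_nonneg : ∀ y, 0 ≤ u y) (hu_supp : ∀ y, R ≤ ‖y‖ → u y = 0)
    (hu' : Continuous u') (hW : ContDiff ℝ 1 W)
    (hdiv : ∀ y, ∑ i, fderiv ℝ W y (EuclideanSpace.single i 1) i = 0)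
    (hineq : ∀ y ∈ ball (0 : EuclideanSpace ℝ ι) R,
      u' y + c * u y + b * fderiv ℝ u y y + fderiv ℝ u y (W y) ≤ 0) :
    ∫ y, q * u y ^ (q - 1) * u' y ≤ -(q * c - Fintype.card ι * b) * ∫ y, u y ^ q := by
  have hpow_zero (y : EuclideanSpace ℝ ι) (hy : y ∉ ball 0 R) : u y ^ (q - 1) = 0 := by
    rw [hu_supp y (by simpa using hy), zero_rpow (by linarith)]
  have hsupp {v : EuclideanSpace ℝ ι → ℝ} (hv : ∀ y ∉ ball 0 R, v y = 0) :
      HasCompactSupport v :=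
    .intro (isCompact_closedBall 0 R) fun y hy =>
      hv y fun hy' => hy (ball_subset_closedBall hy')
  refine integral_le_of_transport_ineq (hu.rpow_const_of_le (by simpa using hq.le))
    (hsupp fun y hy => ?_) hW hdiv ?_ fun y => ?_
  · rw [hu_supp y (by simpa using hy), zero_rpow (by linarith)]
  · refine Continuous.integrable_of_hasCompactSupport ?_
      (hsupp fun y hy => by simp [hpow_zero y hy])
    exact (continuous_const.mul
      ((continuous_rpow_const (by linarith)).comp hu.continuous)).mul hu'
  · have hDu : fderiv ℝ (fun z => u z ^ q) y = (q * u y ^ (q - 1)) • fderiv ℝ u y :=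
      ((hu.differentiable one_ne_zero y).hasFDerivAt.rpow_const (Or.inr hq.le)).fderiv
    have hpow : u y ^ q = u y ^ (q - 1) * u y := by
      rw [← rpow_add_one' (hu_nonneg y) (by linarith), sub_add_cancel]
    have hfactor : q * u y ^ (q - 1) * u' y + q * c * u y ^ q
        + b * fderiv ℝ (fun z => u z ^ q) y y + fderiv ℝ (fun z => u z ^ q) y (W y)
        = q * u y ^ (q - 1) * (u' y + c * u y + b * fderiv ℝ u y y + fderiv ℝ u y (W y)) := by
      simp only [hDu, hpow, FunLike.coe_smul, Pi.smul_apply, smul_eq_mul]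
      ring
    rw [hfactor]
    by_cases hy : y ∈ ball 0 R
    · exact mul_nonpos_of_nonneg_of_nonpos
        (mul_nonneg (by linarith) (rpow_nonneg (hu_nonneg y) _)) (hineq y hy)
    · simp [hpow_zero y hy]

end IntegrationByParts

section Slices

variable {X G : Type*} [NormedAddCommGroup X] [NormedSpace ℝ X]
  [NormedAddCommGroup G] [NormedSpace ℝ G]

theorem ContDiffOn.contDiff_slice {n : WithTop ℕ∞} {Φ : X → ℝ → G} {T : Set ℝ}
    (hΦ : ContDiffOn ℝ n (uncurry Φ) (univ ×ˢ T)) {t : ℝ} (ht : t ∈ T) :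
    ContDiff ℝ n (Φ · t) := by
  rw [← contDiffOn_univ]
  exact hΦ.comp (contDiff_id.prodMk contDiff_const).contDiffOn fun _ _ => ⟨trivial, ht⟩

theorem ContDiffOn.hasDerivAt_slice {Φ : X → ℝ → G} {U : Set ℝ}
    (hΦ : ContDiffOn ℝ 1 (uncurry Φ) (univ ×ˢ U)) (hU : IsOpen U) (y : X) {t : ℝ} (ht : t ∈ U) :
    HasDerivAt (Φ y) (fderiv ℝ (uncurry Φ) (y, t) (0, 1)) t := by
  have hdiff : DifferentiableAt ℝ (uncurry Φ) (y, t) :=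
    (hΦ.contDiffAt ((isOpen_univ.prod hU).mem_nhds ⟨trivial, ht⟩)).differentiableAt one_ne_zero
  exact hdiff.hasFDerivAt.comp_hasDerivAt t ((hasDerivAt_const t y).prodMk (hasDerivAt_id t))

theorem ContDiffOn.continuousOn_deriv_slice {Φ : X → ℝ → G} {U : Set ℝ}
    (hΦ : ContDiffOn ℝ 1 (uncurry Φ) (univ ×ˢ U)) (hU : IsOpen U) :
    ContinuousOn (uncurry fun y t => deriv (Φ y) t) (univ ×ˢ U) :=
  ((hΦ.continuousOn_fderiv_of_isOpen (isOpen_univ.prod hU) le_rfl).clm_apply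
    continuousOn_const).congr fun p hp => (hΦ.hasDerivAt_slice hU p.1 hp.2).deriv

end Slices

section ParametricIntegral

variable {X : Type*} [TopologicalSpace X] [MeasurableSpace X]
  [OpensMeasurableSpace X] {μ : Measure X} [IsFiniteMeasureOnCompacts μ]

theorem hasDerivAt_integral_of_continuousOn_of_compact_support [T2Space X] {F F' : X → ℝ → ℝ}
    {K : Set X} {U : Set ℝ} {s : ℝ} (hK : IsCompact K) (hU : IsOpen U) (hs : s ∈ U)
    (hF : ContinuousOn (uncurry F) (univ ×ˢ U)) (hF' : ContinuousOn (uncurry F') (univ ×ˢ U))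
    (hFK : ∀ y ∉ K, ∀ t ∈ U, F y t = 0) (hF'K : ∀ y ∉ K, ∀ t ∈ U, F' y t = 0)
    (hderiv : ∀ y, ∀ t ∈ U, HasDerivAt (F y) (F' y t) t) :
    HasDerivAt (fun t => ∫ y, F y t ∂μ) (∫ y, F' y s ∂μ) s := by
  have hslice {Φ : X → ℝ → ℝ} (hΦ : ContinuousOn (uncurry Φ) (univ ×ˢ U)) {t : ℝ} (ht : t ∈ U) :
      Continuous (Φ · t) :=
    hΦ.comp_continuous (continuous_id.prodMk continuous_const) fun _ => ⟨trivial, ht⟩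
  obtain ⟨C, hC, hCU, hC_cpt⟩ := local_compact_nhds (hU.mem_nhds hs)
  obtain ⟨M, hM⟩ := (hK.prod hC_cpt).exists_bound_of_continuousOn
    (hF'.mono (prod_mono (subset_univ K) hCU))
  refine (hasDerivAt_integral_of_dominated_loc_of_deriv_le (bound := K.indicator fun _ => M) hC
    ?_ ((hslice hF hs).integrable_of_hasCompactSupport (.intro hK (hFK · · s hs)))
    (hslice hF' hs).aestronglyMeasurable (ae_of_all _ fun y t ht => ?_)
    ((integrable_indicator_iff hK.measurableSet).mpr (integrableOn_const hK.measure_ne_top))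
    (ae_of_all _ fun y t ht => hderiv y t (hCU ht))).2
  · filter_upwards [hU.mem_nhds hs] with t ht using (hslice hF ht).aestronglyMeasurable
  · by_cases hy : y ∈ K
    · simpa [hy] using hM (y, t) ⟨hy, ht⟩
    · simp [hy, hF'K y hy t (hCU ht)]

theorem continuousOn_integral_rpow {f : X → ℝ → ℝ} {K : Set X} {T : Set ℝ} {q : ℝ}
    (hq : 0 < q) (hK : IsCompact K) (hf : ContinuousOn (uncurry f) (univ ×ˢ T))
    (hfK : ∀ y ∉ K, ∀ t ∈ T, f y t = 0) :
    ContinuousOn (fun t => ∫ y, f y t ^ q ∂μ) T := by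
  refine continuousOn_integral_of_compact_support hK ?_ fun t y ht hy => by
    rw [hfK y hy t ht, zero_rpow hq.ne']
  exact ((continuous_rpow_const hq.le).comp_continuousOn hf).comp continuous_swap.continuousOn
    fun p hp => ⟨trivial, hp.1⟩

theorem hasDerivAt_integral_rpow [T2Space X] {f f' : X → ℝ → ℝ} {K : Set X} {U : Set ℝ} {s q : ℝ}
    (hq : 1 ≤ q) (hK : IsCompact K) (hU : IsOpen U) (hs : s ∈ U)
    (hf : ContinuousOn (uncurry f) (univ ×ˢ U)) (hf' : ContinuousOn (uncurry f') (univ ×ˢ U))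
    (hfK : ∀ y ∉ K, ∀ t ∈ U, f y t = 0) (hderiv : ∀ y, ∀ t ∈ U, HasDerivAt (f y) (f' y t) t) :
    HasDerivAt (fun t => ∫ y, f y t ^ q ∂μ) (∫ y, q * f y s ^ (q - 1) * f' y s ∂μ) s := by
  have hf'K (y : X) (hy : y ∉ K) (t : ℝ) (ht : t ∈ U) : f' y t = 0 :=
    (hderiv y t ht).unique ((hasDerivAt_const t 0).congr_of_eventuallyEq
      (Filter.eventually_of_mem (hU.mem_nhds ht) fun t' ht' => hfK y hy t' ht'))
  refine hasDerivAt_integral_of_continuousOn_of_compact_support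
    (F := fun y t => f y t ^ q) (F' := fun y t => q * f y t ^ (q - 1) * f' y t) hK hU hs
    ((continuous_rpow_const (by linarith)).comp_continuousOn hf)
    ((continuousOn_const.mul ((continuous_rpow_const (by linarith)).comp_continuousOn hf)).mul hf')
    (fun y hy t ht => by rw [hfK y hy t ht, zero_rpow (by linarith)])
    (fun y hy t ht => by rw [hf'K y hy t ht, mul_zero])
    fun y t ht => ?_
  convert (hderiv y t ht).rpow_const (Or.inr hq) using 1
  ring

theorem eq_zero_of_integral_rpow_eq_zero [μ.IsOpenPosMeasure] {u : X → ℝ} {q : ℝ} (hq : 0 < q)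
    (hu : Continuous u) (hu_supp : HasCompactSupport u) (hu_nonneg : ∀ y, 0 ≤ u y)
    (h : ∫ y, u y ^ q ∂μ = 0) (y : X) : u y = 0 := by
  by_contra hne
  have := Continuous.integral_pos_of_hasCompactSupport_nonneg_nonzero (μ := μ) (x := y)
    ((continuous_rpow_const hq.le).comp hu) (hu_supp.comp_left (zero_rpow hq.ne'))
    (fun y => rpow_nonneg (hu_nonneg y) q) (by simpa [rpow_eq_zero (hu_nonneg y) hq.ne'] using hne)
  simp_all

end ParametricIntegral

theorem antitoneOn_exp_mul_of_hasDerivAt_le {g g' : ℝ → ℝ} {a b k : ℝ}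
    (hg : ContinuousOn g (Icc a b)) (hg' : ∀ s ∈ Ioo a b, HasDerivAt g (g' s) s)
    (hle : ∀ s ∈ Ioo a b, g' s ≤ -k * g s) :
    AntitoneOn (fun s => exp (k * s) * g s) (Icc a b) := by
  have hderiv (s : ℝ) (hs : s ∈ Ioo a b) :
      HasDerivAt (fun s => exp (k * s) * g s) (exp (k * s) * (k * g s + g' s)) s := by
    have hexp : HasDerivAt (fun s => exp (k * s)) (exp (k * s) * k) s := by
      simpa using ((hasDerivAt_id s).const_mul k).exp
    exact (hexp.mul (hg' s hs)).congr_deriv (by ring)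
  refine antitoneOn_of_deriv_nonpos (convex_Icc a b)
    (((continuous_const.mul continuous_id).rexp).continuousOn.mul hg) ?_ ?_
  · rw [interior_Icc]
    exact fun s hs => (hderiv s hs).differentiableAt.differentiableWithinAt
  · rw [interior_Icc]
    intro s hs
    rw [(hderiv s hs).deriv]
    exact mul_nonpos_of_nonneg_of_nonpos (exp_pos _).le (by linarith [hle s hs])

theorem eqOn_zero_of_hasDerivAt_le_neg_mul_of_eq {g g' : ℝ → ℝ} {a b k : ℝ} (hab : a < b)
    (hk : 0 < k) (hg : ContinuousOn g (Icc a b)) (hg' : ∀ s ∈ Ioo a b, HasDerivAt g (g' s) s)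
    (hle : ∀ s ∈ Ioo a b, g' s ≤ -k * g s) (hg_nonneg : ∀ s ∈ Icc a b, 0 ≤ g s)
    (hper : g a = g b) :
    EqOn g 0 (Icc a b) := by
  have hanti := antitoneOn_exp_mul_of_hasDerivAt_le hg hg' hle
  have ha : a ∈ Icc a b := left_mem_Icc.mpr hab.le
  have hb : b ∈ Icc a b := right_mem_Icc.mpr hab.le
  have hgb : g b = 0 := by
    have hexp : exp (k * a) < exp (k * b) := exp_lt_exp.mpr (by nlinarith)
    have := hanti ha hb hab.le
    simp only [hper] at this
    nlinarith [hg_nonneg b hb]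
  intro s hs
  have := hanti ha hs hs.1
  simp only [hper, hgb, mul_zero] at this
  exact le_antisymm (nonpos_of_mul_nonpos_right this (exp_pos _)) (hg_nonneg s hs)

theorem periodic_differential_inequality_general
    (S₀ R b c : ℝ) (hS₀ : 0 < S₀)
    (hq : ∃ q : ℝ, 2 < q ∧ 0 < c - 3*b/q)
    (V : E3 → ℝ → E3) (f : E3 → ℝ → ℝ)
    (hV : ContDiffOn ℝ 1 (fun p : E3 × ℝ => V p.1 p.2) (Set.univ ×ˢ Set.Icc 0 S₀))
    (hdiv : ∀ (y : E3), ∀ s ∈ Set.Icc (0:ℝ) S₀, div3 (fun z => V z s) y = 0)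
    (hf : ContDiffOn ℝ 1 (fun p : E3 × ℝ => f p.1 p.2) (Set.univ ×ˢ Set.Icc 0 S₀))
    (hfpos : ∀ (y : E3), ∀ s ∈ Set.Icc (0:ℝ) S₀, 0 ≤ f y s)
    (hfsupp : ∀ (y : E3), ∀ s ∈ Set.Icc (0:ℝ) S₀, R ≤ ‖y‖ → f y s = 0)
    (hfper : ∀ y : E3, f y 0 = f y S₀)
    (hineq : ∀ y ∈ Metric.ball (0:E3) R, ∀ s ∈ Set.Ioo (0:ℝ) S₀,
      deriv (fun t => f y t) s + c * f y s
        + b * fderiv ℝ (fun z => f z s) y y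
        + fderiv ℝ (fun z => f z s) y (V y s) ≤ 0) :
    ∀ y ∈ Metric.ball (0:E3) R, ∀ s ∈ Set.Ioo (0:ℝ) S₀, f y s = 0 := by
  obtain ⟨q, hq2, hqc⟩ := hq
  have hq1 : 1 < q := by linarith
  have hrate : 0 < q * c - 3 * b := by
    have := mul_pos (by linarith : (0 : ℝ) < q) hqc
    rwa [mul_sub, mul_div_cancel₀ _ (by linarith : q ≠ 0)] at this
  have hfK : ∀ y ∉ closedBall (0 : E3) R, ∀ t ∈ Icc 0 S₀, f y t = 0 := fun y hy t ht =>
    hfsupp y t ht (by simpa using (not_le.mp (by simpa using hy)).le)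
  have hf' := hf.mono (prod_mono_right (Ioo_subset_Icc_self (a := 0) (b := S₀)))
  have hg : EqOn (fun s => ∫ y, f y s ^ q) 0 (Icc 0 S₀) := by
    refine eqOn_zero_of_hasDerivAt_le_neg_mul_of_eq hS₀ hrate
      (continuousOn_integral_rpow (by linarith) (isCompact_closedBall 0 R) hf.continuousOn hfK)
      (fun s hs => hasDerivAt_integral_rpow hq1.le (isCompact_closedBall 0 R) isOpen_Ioo hs
        hf'.continuousOn (hf'.continuousOn_deriv_slice isOpen_Ioo)
        (fun y hy t ht => hfK y hy t (Ioo_subset_Icc_self ht))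
        fun y t ht => (hf'.hasDerivAt_slice isOpen_Ioo y ht).differentiableAt.hasDerivAt)
      (fun s hs => ?_) (fun s hs => integral_nonneg fun y => rpow_nonneg (hfpos y s hs) q)
      (by simp only [hfper])
    have hs' := Ioo_subset_Icc_self hs
    simpa using integral_rpow_le_of_transport_ineq hq1 (hf.contDiff_slice hs') (hfpos · s hs')
      (hfsupp · s hs') ((hf'.continuousOn_deriv_slice isOpen_Ioo).comp_continuous
        (continuous_id.prodMk continuous_const) fun y => ⟨trivial, hs⟩)
      (hV.contDiff_slice hs') (hdiv · s hs') (hineq · · s hs)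
  intro y _ s hs
  have hs' := Ioo_subset_Icc_self hs
  exact eq_zero_of_integral_rpow_eq_zero (by linarith) (hf.contDiff_slice hs').continuous
    (.intro (isCompact_closedBall 0 R) (hfK · · s hs')) (hfpos · s hs') (hg hs') y

/-- The periodic Gronwall-type lemma: a nonnegative C¹ function, compactly
supported in B_R, periodic in time, and satisfying the differential inequality
∂ₛf + c f + b (y·∇)f + (V·∇)f ≤ 0 with c - 3b/q > 0 for some q > 2, vanishes. -/
theorem periodic_differential_inequality
    (S₀ R b c : ℝ) (hS₀ : 0 < S₀) (hR : 0 < R)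
    (hq : ∃ q : ℝ, 2 < q ∧ 0 < c - 3*b/q)
    (V : E3 → ℝ → E3) (f : E3 → ℝ → ℝ)
    (hV : ContDiffOn ℝ 1 (fun p : E3 × ℝ => V p.1 p.2) (Set.univ ×ˢ Set.Icc 0 S₀))
    (hdiv : ∀ (y : E3), ∀ s ∈ Set.Icc (0:ℝ) S₀, div3 (fun z => V z s) y = 0)
    (hf : ContDiffOn ℝ 1 (fun p : E3 × ℝ => f p.1 p.2) (Set.univ ×ˢ Set.Icc 0 S₀))
    (hfpos : ∀ (y : E3), ∀ s ∈ Set.Icc (0:ℝ) S₀, 0 ≤ f y s)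
    (hfsupp : ∀ (y : E3), ∀ s ∈ Set.Icc (0:ℝ) S₀, R ≤ ‖y‖ → f y s = 0)
    (hfper : ∀ y : E3, f y 0 = f y S₀)
    (hineq : ∀ y ∈ Metric.ball (0:E3) R, ∀ s ∈ Set.Ioo (0:ℝ) S₀,
      deriv (fun t => f y t) s + c * f y s
        + b * fderiv ℝ (fun z => f z s) y y
        + fderiv ℝ (fun z => f z s) y (V y s) ≤ 0) :
    ∀ y ∈ Metric.ball (0:E3) R, ∀ s ∈ Set.Ioo (0:ℝ) S₀, f y s = 0 :=
  periodic_differential_inequality_general S₀ R b c hS₀ hq V f hV hdiv hf hfpos hfsupp hfper hineq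
end
end

section
/- Let α > 0, δ ∈ (0,1), and let (V, B, P) be a solution of the self-similar MHD system on ℝ³ × ℝ which is time-periodic with period S₀ > 0, with V of class C¹ in s, V(·,s) of class C¹ in y, and B of class C¹ on ℝ³ × ℝ. Suppose V(0,s) = 0 and D_yV(0,s) = 0 for all s ∈ (0,S₀). Let R > 0, set M = sup over s ∈ (0,S₀) of the δ-Hölder seminorm of D_yV(·,s) on B_R, assume 0 < M < ∞, and set μ = min{ 1/(2(α+1)M), α/(2(α+1)M) } and R₀ = min{ R, μ^{1/δ} }. Then B = 0 on B_{R₀} × (0,S₀). -/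
noncomputable section

open Real Metric Set

open scoped RealInnerProductSpace NNReal

/-!
Let `w(y) = R₀² - |y|²` and take a maximum point `(y₁, s₁)` of `|B|² w` over `B̄_{R₀} × ℝ`
(it exists by periodicity). If the maximum were positive, `y₁` is interior, so `b = B(y₁, s₁)`
satisfies `b · ∂ₛb = 0` and `w (DB)ᵀ b = |b|² y₁`. Pairing the induction equation with `b` and
multiplying by `(α+1) w` gives `α w |b|² + |y₁|² |b|² + (α+1) |b|² (y₁ · V) = (α+1) w (DV b · b)`.
Near the origin `V` is `c`-Lipschitz with `V(0) = 0`, `c = Mμ`, and `2(α+1)c ≤ min 1 α` makes the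
left side at least `α w |b|² + |y₁|² |b|² / 2` and the right side at most `α w |b|² / 2`,
so `b = 0`.
-/

theorem eq_zero_of_induction_eq_at_weighted_critical_point {E : Type*} [NormedAddCommGroup E]
    [InnerProductSpace ℝ E] {α c w : ℝ} {b b' y v : E}
    {L A : E →L[ℝ] E} (hα : 0 < α) (hc : 2 * (α + 1) * c ≤ min 1 α) (hw : 0 < w)
    (heq : b' + (α / (α + 1)) • b + (1 / (α + 1)) • L y + L v = A b)
    (hb' : ⟪b', b⟫ = 0) (hL : ∀ u, w * ⟪L u, b⟫ = ‖b‖ ^ 2 * ⟪y, u⟫)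
    (hv : ‖v‖ ≤ c * ‖y‖) (hA : ‖A‖ ≤ c) : b = 0 := by
  have hpair := congrArg (⟪·, b⟫) heq
  simp only [inner_add_left, real_inner_smul_left, hb', real_inner_self_eq_norm_sq] at hpair
  have hLy := hL y
  have hLv := hL v
  rw [real_inner_self_eq_norm_sq] at hLy
  have hα1 : α + 1 ≠ 0 := by positivity
  have hweighted : α * w * ‖b‖ ^ 2 + ‖b‖ ^ 2 * ‖y‖ ^ 2 + (α + 1) * (‖b‖ ^ 2 * ⟪y, v⟫)
      = (α + 1) * w * ⟪A b, b⟫ := by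
    field_simp at hpair
    linear_combination w * hpair - hLy - (α + 1) * hLv
  have hAb : ⟪A b, b⟫ ≤ c * ‖b‖ ^ 2 := by
    calc ⟪A b, b⟫ ≤ ‖A b‖ * ‖b‖ := real_inner_le_norm _ _
      _ ≤ c * ‖b‖ * ‖b‖ := by gcongr; exact A.le_of_opNorm_le hA b
      _ = c * ‖b‖ ^ 2 := by ring
  have hyv : -(c * ‖y‖ ^ 2) ≤ ⟪y, v⟫ := by
    calc -(c * ‖y‖ ^ 2) ≤ -(‖y‖ * ‖v‖) := by nlinarith [norm_nonneg y]
      _ ≤ ⟪y, v⟫ := neg_le_of_abs_le (abs_real_inner_le_norm y v)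
  have hc1 : 2 * (α + 1) * c ≤ 1 := hc.trans (min_le_left _ _)
  have hc2 : 2 * (α + 1) * c ≤ α := hc.trans (min_le_right _ _)
  have hb2 : ‖b‖ ^ 2 * (α * w + ‖y‖ ^ 2) ≤ 0 := by
    nlinarith [mul_le_mul_of_nonneg_left hyv (by positivity : 0 ≤ (α + 1) * ‖b‖ ^ 2),
      mul_le_mul_of_nonneg_left hAb (by positivity : 0 ≤ (α + 1) * w),
      mul_le_mul_of_nonneg_right hc1 (by positivity : 0 ≤ ‖b‖ ^ 2 * ‖y‖ ^ 2),
      mul_le_mul_of_nonneg_right hc2 (by positivity : 0 ≤ w * ‖b‖ ^ 2)]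
  have hbn : ‖b‖ ^ 2 ≤ 0 := nonpos_of_mul_nonpos_left hb2 (by positivity)
  simpa using hbn

section CriticalPoint

variable {E F : Type*} [NormedAddCommGroup E] [InnerProductSpace ℝ E]
  [NormedAddCommGroup F] [InnerProductSpace ℝ F]

theorem inner_deriv_self_eq_zero_of_isLocalMax_norm_sq {f : ℝ → F} {t : ℝ}
    (hf : DifferentiableAt ℝ f t) (hmax : IsLocalMax (‖f ·‖ ^ 2) t) :
    ⟪deriv f t, f t⟫ = 0 := by
  have h := hmax.hasDerivAt_eq_zero hf.hasDerivAt.norm_sq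
  rw [real_inner_comm]
  linarith

theorem inner_fderiv_eq_of_isLocalMax_norm_sq_mul {f : E → F} {y : E} {r : ℝ}
    (hf : DifferentiableAt ℝ f y) (hmax : IsLocalMax (fun z ↦ ‖f z‖ ^ 2 * (r ^ 2 - ‖z‖ ^ 2)) y)
    (u : E) : (r ^ 2 - ‖y‖ ^ 2) * ⟪fderiv ℝ f y u, f y⟫ = ‖f y‖ ^ 2 * ⟪y, u⟫ := by
  have hderiv := hf.hasFDerivAt.norm_sq.mul
    ((hasFDerivAt_const (r ^ 2) y).sub (hasStrictFDerivAt_norm_sq y).hasFDerivAt)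
  have h := congrArg (· u) (hmax.hasFDerivAt_eq_zero hderiv)
  simp only [add_apply, smul_apply, Pi.sub_apply, sub_apply, zero_apply,
    ContinuousLinearMap.comp_apply, innerSL_apply_apply, smul_eq_mul, nsmul_eq_mul,
    Nat.cast_ofNat] at h
  rw [real_inner_comm]
  linarith

end CriticalPoint

theorem IsCompact.exists_forall_ge_of_periodic {X : Type*} [TopologicalSpace X] {K : Set X}
    (hK : IsCompact K) (hKne : K.Nonempty) {G : X → ℝ → ℝ} (hG : Continuous (Function.uncurry G))
    {c : ℝ} (hc : 0 < c) (hper : ∀ x, Function.Periodic (G x) c) :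
    ∃ x₀ ∈ K, ∃ t₀, ∀ x ∈ K, ∀ t, G x t ≤ G x₀ t₀ := by
  obtain ⟨⟨x₀, t₀⟩, hmem, hmax⟩ :=
    (hK.prod isCompact_Icc).exists_isMaxOn (hKne.prod (nonempty_Icc.2 hc.le)) hG.continuousOn
  refine ⟨x₀, hmem.1, t₀, fun x hx t ↦ ?_⟩
  obtain ⟨t', ht', heq⟩ := (hper x).exists_mem_Ico₀ hc t
  rw [heq]
  exact hmax (mk_mem_prod hx (Ico_subset_Icc_self ht'))

theorem Function.Periodic.mem_of_forall_mem_Ioo {X : Type*} [TopologicalSpace X] {g : ℝ → X}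
    {c : ℝ} (hg : Function.Periodic g c) (hc : 0 < c) (hgc : Continuous g) {S : Set X}
    (hS : IsClosed S) (h : ∀ t ∈ Ioo 0 c, g t ∈ S) (t : ℝ) : g t ∈ S := by
  have hIcc : Icc 0 c ⊆ g ⁻¹' S := by
    rw [← closure_Ioo hc.ne]
    exact closure_minimal h (hS.preimage hgc)
  obtain ⟨t', ht', heq⟩ := hg.exists_mem_Ico₀ hc t
  rw [heq]
  exact hIcc (Ico_subset_Icc_self ht')

theorem lipschitzOnWith_ball_of_holder_fderiv {E F : Type*} [NormedAddCommGroup E]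
    [NormedSpace ℝ E] [NormedAddCommGroup F] [NormedSpace ℝ F] {f : E → F} {M δ R r : ℝ}
    {c : ℝ≥0} (hf : Differentiable ℝ f) (hf0 : fderiv ℝ f 0 = 0) (hM : 0 ≤ M) (hδ : 0 < δ)
    (hrR : r ≤ R) (hc : M * r ^ δ ≤ c)
    (hholder : ∀ y₁ ∈ ball (0 : E) R, ∀ y₂ ∈ ball (0 : E) R,
      ‖fderiv ℝ f y₁ - fderiv ℝ f y₂‖ ≤ M * ‖y₁ - y₂‖ ^ δ) :
    LipschitzOnWith c f (ball 0 r) := by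
  refine (convex_ball 0 r).lipschitzOnWith_of_nnnorm_fderiv_le (fun x _ ↦ hf x) fun x hx ↦ ?_
  have hxR : x ∈ ball (0 : E) R := ball_subset_ball hrR hx
  have hx' : ‖x‖ < r := mem_ball_zero_iff.1 hx
  rw [← NNReal.coe_le_coe, coe_nnnorm]
  calc ‖fderiv ℝ f x‖ = ‖fderiv ℝ f x - fderiv ℝ f 0‖ := by rw [hf0, sub_zero]
    _ ≤ M * ‖x - 0‖ ^ δ := hholder x hxR 0 (mem_ball_self (pos_of_mem_ball hxR))
    _ ≤ M * r ^ δ := by rw [sub_zero]; gcongr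
    _ ≤ c := hc

theorem magnetic_eq_zero_on_ball_of_lipschitzOnWith_velocity {E : Type*} [NormedAddCommGroup E]
    [InnerProductSpace ℝ E] [FiniteDimensional ℝ E] {α S₀ r : ℝ} {c : ℝ≥0} {V B : E → ℝ → E}
    (hα : 0 < α) (hS₀ : 0 < S₀) (hB : Differentiable ℝ (fun p : E × ℝ => B p.1 p.2))
    (heqB : ∀ (y : E) (s : ℝ),
      deriv (fun t => B y t) s + (α/(α+1)) • B y s
        + (1/(α+1)) • fderiv ℝ (fun z => B z s) y y
        + fderiv ℝ (fun z => B z s) y (V y s)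
      = fderiv ℝ (fun z => V z s) y (B y s))
    (hperB : ∀ (y : E) (s : ℝ), B y (s + S₀) = B y s) (hc : 2 * (α + 1) * c ≤ min 1 α)
    (hV : ∀ s, LipschitzOnWith c (fun z => V z s) (ball 0 r) ∧ V 0 s = 0) :
    ∀ y ∈ ball (0 : E) r, ∀ s, B y s = 0 := by
  intro y hy s
  have hr : 0 < r := pos_of_mem_ball hy
  have hB_t : ∀ z, Differentiable ℝ (B z) :=
    fun z ↦ hB.comp ((differentiable_const z).prodMk differentiable_id)
  have hB_y : ∀ t, Differentiable ℝ (fun z ↦ B z t) :=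
    fun t ↦ hB.comp (differentiable_id.prodMk (differentiable_const t))
  let G : E → ℝ → ℝ := fun z t ↦ ‖B z t‖ ^ 2 * (r ^ 2 - ‖z‖ ^ 2)
  obtain ⟨y₁, hy₁, s₁, hmax⟩ := (isCompact_closedBall (0 : E) r).exists_forall_ge_of_periodic
    (nonempty_closedBall.2 hr.le) (G := G)
    ((hB.continuous.norm.pow 2).mul (continuous_const.sub (continuous_fst.norm.pow 2))) hS₀
    fun z t ↦ by simp only [G, hperB]
  suffices hG : G y₁ s₁ ≤ 0 by
    have hw : 0 < r ^ 2 - ‖y‖ ^ 2 := by nlinarith [mem_ball_zero_iff.1 hy, norm_nonneg y]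
    have hBy : ‖B y s‖ ^ 2 ≤ 0 :=
      nonpos_of_mul_nonpos_left ((hmax y (ball_subset_closedBall hy) s).trans hG) hw
    simpa using hBy
  by_contra! hG
  have hw : 0 < r ^ 2 - ‖y₁‖ ^ 2 := pos_of_mul_pos_right hG (by positivity)
  have hy₁' : y₁ ∈ ball (0 : E) r := mem_ball_zero_iff.2 (by nlinarith [norm_nonneg y₁])
  have hb : B y₁ s₁ = 0 := by
    refine eq_zero_of_induction_eq_at_weighted_critical_point hα hc hw (heqB y₁ s₁)
      (inner_deriv_self_eq_zero_of_isLocalMax_norm_sq (hB_t y₁ s₁) ?_)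
      (inner_fderiv_eq_of_isLocalMax_norm_sq_mul (hB_y s₁ y₁) ?_) ?_
      (norm_fderiv_le_of_lipschitzOn ℝ (isOpen_ball.mem_nhds hy₁') (hV s₁).1)
    · exact Filter.Eventually.of_forall fun t ↦ le_of_mul_le_mul_right (hmax y₁ hy₁ t) hw
    · exact Filter.eventually_of_mem (isOpen_ball.mem_nhds hy₁')
        fun z hz ↦ hmax z (ball_subset_closedBall hz) s₁
    · simpa [(hV s₁).2] using (hV s₁).1.norm_sub_le hy₁' (mem_ball_self hr)
  simp [G, hb] at hG

theorem mhd_magnetic_vanishes_first_ball_general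
    (α δ S₀ : ℝ) (hα : 0 < α) (hδ : δ ∈ Set.Ioo (0:ℝ) 1) (hS₀ : 0 < S₀)
    (V B : E3 → ℝ → E3)
    (hV_s : ∀ y : E3, ContDiff ℝ 1 (fun s : ℝ => V y s))
    (hV_y : ∀ s : ℝ, ContDiff ℝ 1 (fun y : E3 => V y s))
    (hB : ContDiff ℝ 1 (fun p : E3 × ℝ => B p.1 p.2))
    (heqB : ∀ (y : E3) (s : ℝ),
      deriv (fun t => B y t) s + (α/(α+1)) • B y s
        + (1/(α+1)) • fderiv ℝ (fun z => B z s) y y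
        + fderiv ℝ (fun z => B z s) y (V y s)
      = fderiv ℝ (fun z => V z s) y (B y s))
    (hperV : ∀ (y : E3) (s : ℝ), V y (s + S₀) = V y s)
    (hperB : ∀ (y : E3) (s : ℝ), B y (s + S₀) = B y s)
    (hV0 : ∀ s ∈ Set.Ioo (0:ℝ) S₀, V 0 s = 0)
    (hDV0 : ∀ s ∈ Set.Ioo (0:ℝ) S₀, fderiv ℝ (fun z => V z s) 0 = 0)
    (R M : ℝ) (hM : 0 < M)
    (hMb : ∀ s ∈ Set.Ioo (0:ℝ) S₀, ∀ y₁ ∈ Metric.ball (0:E3) R, ∀ y₂ ∈ Metric.ball (0:E3) R,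
      ‖fderiv ℝ (fun z => V z s) y₁ - fderiv ℝ (fun z => V z s) y₂‖ ≤ M * ‖y₁ - y₂‖ ^ δ)
    (μ R₀ : ℝ)
    (hμ : μ = min (1/(2*(α+1)*M)) (α/(2*(α+1)*M)))
    (hR₀ : R₀ = min R (μ ^ (1/δ))) :
    ∀ y ∈ Metric.ball (0:E3) R₀, ∀ s ∈ Set.Ioo (0:ℝ) S₀, B y s = 0 := by
  intro y hy s _
  have hR₀pos : 0 < R₀ := pos_of_mem_ball hy
  rw [min_div_div_right (by positivity)] at hμ
  have hμpos : 0 < μ := by rw [hμ]; exact div_pos (lt_min one_pos hα) (by positivity)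
  let c : ℝ≥0 := ⟨M * μ, by positivity⟩
  have hc : 2 * (α + 1) * c = min 1 α := by
    change 2 * (α + 1) * (M * μ) = _
    rw [hμ]
    field_simp
  have hradius : M * R₀ ^ δ ≤ c := by
    refine mul_le_mul_of_nonneg_left ((le_rpow_inv_iff_of_pos hR₀pos.le hμpos.le hδ.1).1 ?_) hM.le
    rw [← one_div, hR₀]
    exact min_le_right _ _
  have hV : ∀ t, LipschitzOnWith c (fun z ↦ V z t) (ball 0 R₀) ∧ V 0 t = 0 :=
    Function.Periodic.mem_of_forall_mem_Ioo (g := fun t z ↦ V z t)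
      (fun t ↦ funext fun z ↦ hperV z t) hS₀ (continuous_pi fun z ↦ (hV_s z).continuous)
      ((isClosed_setOfPred_lipschitzOnWith c _).inter (isClosed_eq (continuous_apply 0)
        continuous_const))
      fun t ht ↦ ⟨lipschitzOnWith_ball_of_holder_fderiv ((hV_y t).differentiable one_ne_zero)
        (hDV0 t ht) hM.le hδ.1 (hR₀.trans_le (min_le_left _ _)) hradius (hMb t ht), hV0 t ht⟩
  exact magnetic_eq_zero_on_ball_of_lipschitzOnWith_velocity hα hS₀
    (hB.differentiable one_ne_zero) heqB hperB hc.le hV y hy s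

/-- First step of the proof of Theorem 1.4 (A): for the self-similar MHD system
with α > 0, the magnetic field vanishes on the ball B_{R₀}. -/
theorem mhd_magnetic_vanishes_first_ball
    (α δ S₀ : ℝ) (hα : 0 < α) (hδ : δ ∈ Set.Ioo (0:ℝ) 1) (hS₀ : 0 < S₀)
    (V B : E3 → ℝ → E3) (P : E3 → ℝ → ℝ)
    (hV_s : ∀ y : E3, ContDiff ℝ 1 (fun s : ℝ => V y s))
    (hV_y : ∀ s : ℝ, ContDiff ℝ 1 (fun y : E3 => V y s))
    (hB : ContDiff ℝ 1 (fun p : E3 × ℝ => B p.1 p.2))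
    (heqV : ∀ (y : E3) (s : ℝ),
      deriv (fun t => V y t) s + (α/(α+1)) • V y s
        + (1/(α+1)) • fderiv ℝ (fun z => V z s) y y
        + fderiv ℝ (fun z => V z s) y (V y s)
      = fderiv ℝ (fun z => B z s) y (B y s)
        - gradient (fun z => P z s + ‖B z s‖ ^ 2 / 2) y)
    (heqB : ∀ (y : E3) (s : ℝ),
      deriv (fun t => B y t) s + (α/(α+1)) • B y s
        + (1/(α+1)) • fderiv ℝ (fun z => B z s) y y
        + fderiv ℝ (fun z => B z s) y (V y s)
      = fderiv ℝ (fun z => V z s) y (B y s))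
    (hdivV : ∀ (y : E3) (s : ℝ), div3 (fun z => V z s) y = 0)
    (hdivB : ∀ (y : E3) (s : ℝ), div3 (fun z => B z s) y = 0)
    (hperV : ∀ (y : E3) (s : ℝ), V y (s + S₀) = V y s)
    (hperB : ∀ (y : E3) (s : ℝ), B y (s + S₀) = B y s)
    (hV0 : ∀ s ∈ Set.Ioo (0:ℝ) S₀, V 0 s = 0)
    (hDV0 : ∀ s ∈ Set.Ioo (0:ℝ) S₀, fderiv ℝ (fun z => V z s) 0 = 0)
    (R M : ℝ) (hRpos : 0 < R) (hM : 0 < M)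
    (hMb : ∀ s ∈ Set.Ioo (0:ℝ) S₀, ∀ y₁ ∈ Metric.ball (0:E3) R, ∀ y₂ ∈ Metric.ball (0:E3) R,
      ‖fderiv ℝ (fun z => V z s) y₁ - fderiv ℝ (fun z => V z s) y₂‖ ≤ M * ‖y₁ - y₂‖ ^ δ)
    (μ R₀ : ℝ)
    (hμ : μ = min (1/(2*(α+1)*M)) (α/(2*(α+1)*M)))
    (hR₀ : R₀ = min R (μ ^ (1/δ))) :
    ∀ y ∈ Metric.ball (0:E3) R₀, ∀ s ∈ Set.Ioo (0:ℝ) S₀, B y s = 0 :=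
  mhd_magnetic_vanishes_first_ball_general α δ S₀ hα hδ hS₀ V B hV_s hV_y hB heqB hperV hperB hV0
    hDV0 R M hM hMb μ R₀ hμ hR₀
end
end
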